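/- Any mode m of the Poisson distribution of order k satisfies m ≤ ⌊λk(k+1)/2⌋, i.e., m ≤ λk(k+1)/2. -/

import Mathlib

open scoped BigOperators
open Real

/-- The pmf of the Poisson distribution of order `k` with parameter `lam`,
indexed by `x : ℤ` (it vanishes for `x < 0`):
`f_k(x;λ) = Σ e^{-kλ} λ^{x₁+⋯+x_k}/(x₁!⋯x_k!)` summed over all `k`-tuples of
nonnegative integers with `x₁ + 2x₂ + ⋯ + k x_k = x`. -/
noncomputable def poissonOrderK (k : ℕ) (lam : ℝ) (x : ℤ) : ℝ :=
  ∑' t : Fin k → ℕ,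
    if ((∑ i : Fin k, ((i : ℕ) + 1) * t i : ℕ) : ℤ) = x then
      Real.exp (-(k * lam)) * lam ^ (∑ i : Fin k, t i) /
        ∏ i : Fin k, (Nat.factorial (t i) : ℝ)
    else 0

/-- The difference `Δ_x = P_x - P_{x-1}`. -/
noncomputable def deltaOrderK (k : ℕ) (lam : ℝ) (x : ℤ) : ℝ :=
  poissonOrderK k lam x - poissonOrderK k lam (x - 1)

/-!
Writing `x = Σ (i+1) tᵢ` for a tuple `t` on the level set of `x`, and trading a factor `tᵢ`
against one power of `λ` by lowering `tᵢ` by one, gives the recurrence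
`x P_x = λ Σ_{i<k} (i+1) P_{x-(i+1)}`. At a mode `m` every `P_{m-j}` is at most `P_m > 0`, so
`m P_m ≤ λ (1 + ⋯ + k) P_m = λ k (k+1)/2 · P_m`.
-/

namespace PoissonOrderK

variable {k : ℕ}

def weightedSum (t : Fin k → ℕ) : ℕ := ∑ i : Fin k, ((i : ℕ) + 1) * t i

noncomputable def weight (k : ℕ) (lam : ℝ) (t : Fin k → ℕ) : ℝ :=
  Real.exp (-(k * lam)) * lam ^ (∑ i, t i) / ∏ i, ((t i).factorial : ℝ)

theorem poissonOrderK_eq_tsum (lam : ℝ) (x : ℤ) :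
    poissonOrderK k lam x = ∑' t, if (weightedSum t : ℤ) = x then weight k lam t else 0 :=
  rfl

theorem weight_pos {lam : ℝ} (hlam : 0 < lam) (t : Fin k → ℕ) : 0 < weight k lam t := by
  unfold weight; positivity

theorem le_weightedSum (t : Fin k → ℕ) (i : Fin k) : t i ≤ weightedSum t :=
  calc t i ≤ ((i : ℕ) + 1) * t i := Nat.le_mul_of_pos_left _ i.val.succ_pos
    _ ≤ weightedSum t := Finset.single_le_sum (f := fun j : Fin k => ((j : ℕ) + 1) * t j)
        (fun _ _ => Nat.zero_le _) (Finset.mem_univ i)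

theorem finite_weightedSum_eq (x : ℤ) : {t : Fin k → ℕ | (weightedSum t : ℤ) = x}.Finite :=
  (Set.finite_Iic fun _ => x.toNat).subset fun t (ht : (weightedSum t : ℤ) = x) i => by
    have := le_weightedSum t i
    change t i ≤ x.toNat
    omega

theorem summable_ite_weightedSum_eq (x : ℤ) (f : (Fin k → ℕ) → ℝ) :
    Summable fun t => if (weightedSum t : ℤ) = x then f t else 0 :=
  summable_of_hasFiniteSupport <| (finite_weightedSum_eq x).subset fun t ht => by
    by_contra h
    exact ht (if_neg h)

def bump (i : Fin k) (s : Fin k → ℕ) : Fin k → ℕ := Function.update s i (s i + 1)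

@[to_additive]
theorem mul_prod_update {M : Type*} [CommMonoid M] (g : Fin k → ℕ → M) (s : Fin k → ℕ)
    (i : Fin k) (a : ℕ) :
    g i (s i) * ∏ j, g j (Function.update s i a j) = g i a * ∏ j, g j (s j) := by
  rw [Fintype.prod_eq_mul_prod_compl i, Fintype.prod_eq_mul_prod_compl i (fun j => g j (s j)),
    Function.update_self, mul_left_comm]
  congr 2
  refine Finset.prod_congr rfl fun j hj => ?_
  rw [Function.update_of_ne (by simpa using hj)]

theorem bump_apply_self (i : Fin k) (s : Fin k → ℕ) : bump i s i = s i + 1 :=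
  Function.update_self ..

theorem bump_injective (i : Fin k) : Function.Injective (bump i) := by
  intro s s' h
  have hi : s i = s' i := by simpa [bump_apply_self] using congrFun h i
  funext j
  rcases eq_or_ne j i with rfl | hj
  · exact hi
  · simpa [bump, hj] using congrFun h j

theorem mem_range_bump {i : Fin k} {t : Fin k → ℕ} (ht : t i ≠ 0) : t ∈ Set.range (bump i) :=
  ⟨Function.update t i (t i - 1), by
    rw [bump, Function.update_self, Function.update_idem,
      Nat.sub_add_cancel (Nat.pos_of_ne_zero ht), Function.update_eq_self]⟩

theorem weightedSum_bump (i : Fin k) (s : Fin k → ℕ) :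
    weightedSum (bump i s) = weightedSum s + ((i : ℕ) + 1) := by
  have := add_sum_update (fun j n => ((j : ℕ) + 1) * n) s i (s i + 1)
  rw [weightedSum, weightedSum, bump]
  linarith

theorem sum_bump (i : Fin k) (s : Fin k → ℕ) : ∑ j, bump i s j = ∑ j, s j + 1 := by
  have := add_sum_update (fun _ n => n) s i (s i + 1)
  rw [bump]
  omega

theorem prod_factorial_bump (i : Fin k) (s : Fin k → ℕ) :
    ∏ j, (bump i s j).factorial = (s i + 1) * ∏ j, (s j).factorial := by
  have := mul_prod_update (fun _ n => n.factorial) s i (s i + 1)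
  rw [Nat.factorial_succ, mul_assoc] at this
  exact Nat.eq_of_mul_eq_mul_left (s i).factorial_pos (by rw [bump, this]; ring)

theorem coord_mul_weight_bump (lam : ℝ) (i : Fin k) (s : Fin k → ℕ) :
    (bump i s i : ℝ) * weight k lam (bump i s) = lam * weight k lam s := by
  have hfac := congrArg (Nat.cast (R := ℝ)) (prod_factorial_bump i s)
  push_cast at hfac
  have : (∏ j, ((s j).factorial : ℝ)) ≠ 0 := by positivity
  rw [weight, weight, sum_bump, hfac, bump_apply_self, pow_succ]
  push_cast
  field_simp

theorem tsum_ite_coord_mul_weight (lam : ℝ) (x : ℤ) (i : Fin k) :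
    (∑' t, if (weightedSum t : ℤ) = x then (t i : ℝ) * weight k lam t else 0) =
      lam * poissonOrderK k lam (x - ((i : ℕ) + 1)) := by
  -- reindex by `bump i`, whose range contains every tuple with `t i ≠ 0`
  have hsupp : Function.support
      (fun t => if (weightedSum t : ℤ) = x then (t i : ℝ) * weight k lam t else 0) ⊆
        Set.range (bump i) := fun t ht =>
    mem_range_bump fun h0 => ht (by simp [h0])
  rw [← (bump_injective i).tsum_eq hsupp, poissonOrderK_eq_tsum, ← tsum_mul_left]
  congr 1 with s
  rw [coord_mul_weight_bump, weightedSum_bump, mul_ite, mul_zero]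
  push_cast
  simp only [eq_sub_iff_add_eq]

theorem mul_poissonOrderK (lam : ℝ) (x : ℤ) :
    x * poissonOrderK k lam x =
      lam * ∑ i : Fin k, ((i : ℕ) + 1 : ℝ) * poissonOrderK k lam (x - ((i : ℕ) + 1)) := by
  have hterm : ∀ t : Fin k → ℕ,
      x * (if (weightedSum t : ℤ) = x then weight k lam t else 0) =
        ∑ i : Fin k, ((i : ℕ) + 1 : ℝ) *
          (if (weightedSum t : ℤ) = x then (t i : ℝ) * weight k lam t else 0) := by
    intro t
    split_ifs with h
    · rw [← h, weightedSum]
      push_cast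
      rw [Finset.sum_mul]
      exact Finset.sum_congr rfl fun i _ => by ring
    · simp
  rw [poissonOrderK_eq_tsum, ← tsum_mul_left, funext hterm,
    Summable.tsum_finsetSum fun i _ => (summable_ite_weightedSum_eq x _).mul_left _,
    Finset.mul_sum]
  refine Finset.sum_congr rfl fun i _ => ?_
  rw [tsum_mul_left, tsum_ite_coord_mul_weight]
  ring

theorem poissonOrderK_of_neg (lam : ℝ) {x : ℤ} (hx : x < 0) : poissonOrderK k lam x = 0 := by
  rw [poissonOrderK_eq_tsum]
  convert tsum_zero with t
  exact if_neg (by omega)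

theorem poissonOrderK_zero_pos {lam : ℝ} (hlam : 0 < lam) : 0 < poissonOrderK k lam 0 := by
  rw [poissonOrderK_eq_tsum]
  refine (summable_ite_weightedSum_eq 0 _).tsum_pos (fun t => ?_) 0 ?_
  · split_ifs
    exacts [(weight_pos hlam t).le, le_rfl]
  · rw [if_pos (by simp [weightedSum])]
    exact weight_pos hlam 0

theorem poissonOrderK_le_of_forall_natCast_le {lam M : ℝ} (hM : 0 ≤ M)
    (h : ∀ n : ℕ, poissonOrderK k lam n ≤ M) (x : ℤ) : poissonOrderK k lam x ≤ M := by
  rcases lt_or_ge x 0 with hx | hx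
  · rw [poissonOrderK_of_neg lam hx]
    exact hM
  · lift x to ℕ using hx
    exact h x

end PoissonOrderK

open PoissonOrderK

theorem sum_fin_natCast_add_one (k : ℕ) : ∑ i : Fin k, ((i : ℕ) + 1 : ℝ) = k * (k + 1) / 2 := by
  rw [Fin.sum_univ_eq_sum_range (fun i => (i + 1 : ℝ))]
  induction k with
  | zero => simp
  | succ k ih =>
    rw [Finset.sum_range_succ, ih]
    push_cast
    ring

theorem poissonOrderK_mode_upper_bound_general (k : ℕ) (lam : ℝ) (hlam : 0 < lam)
    (m : ℕ) (hm : ∀ x : ℕ, poissonOrderK k lam (x : ℤ) ≤ poissonOrderK k lam (m : ℤ)) :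
    (m : ℤ) ≤ ⌊lam * k * (k + 1) / 2⌋ := by
  have hPm : 0 < poissonOrderK k lam m := (poissonOrderK_zero_pos hlam).trans_le (hm 0)
  have hle (x : ℤ) : poissonOrderK k lam x ≤ poissonOrderK k lam m :=
    poissonOrderK_le_of_forall_natCast_le hPm.le hm x
  have key : (m : ℝ) * poissonOrderK k lam m ≤ lam * k * (k + 1) / 2 * poissonOrderK k lam m :=
    calc (m : ℝ) * poissonOrderK k lam m
        = lam * ∑ i : Fin k, ((i : ℕ) + 1 : ℝ) * poissonOrderK k lam (m - ((i : ℕ) + 1)) := by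
          exact_mod_cast mul_poissonOrderK lam m
      _ ≤ lam * ∑ i : Fin k, ((i : ℕ) + 1 : ℝ) * poissonOrderK k lam m := by
          gcongr with i
          exact hle _
      _ = lam * k * (k + 1) / 2 * poissonOrderK k lam m := by
          rw [← Finset.sum_mul, sum_fin_natCast_add_one]
          ring
  rw [Int.le_floor]
  exact_mod_cast le_of_mul_le_mul_right key hPm

theorem poissonOrderK_mode_upper_bound (k : ℕ) (hk : 1 ≤ k) (lam : ℝ) (hlam : 0 < lam)
    (m : ℕ) (hm : ∀ x : ℕ, poissonOrderK k lam (x : ℤ) ≤ poissonOrderK k lam (m : ℤ)) :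
    (m : ℤ) ≤ ⌊lam * k * (k + 1) / 2⌋ :=
  poissonOrderK_mode_upper_bound_general k lam hlam m hm
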